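/- For a short exact sequence 0 → A → B → C → 0 of finitely generated abelian groups with j : B → C, the quotient C / j(tor B) is isomorphic to the quotient of a free abelian group B/tor B by the image of A/tor A, and in particular the torsion subgroup of C/j(tor B) has order at most e(C)^{rk A}. -/

import Mathlib

/-!
Both groups in the isomorphism are quotients of `B` by `tor B + i(A)`. For the bound, a torsion
class of `C ⧸ j(tor B)` is represented by some `j b` that is torsion in `C`, so `e • b = i a` for
some `a : A`. The class of `a` in `(A ⧸ tor A) ⧸ e • (A ⧸ tor A)` determines the class of `j b`,
which embeds the torsion of `C ⧸ j(tor B)` into a group of order `e ^ rk (A ⧸ tor A)`.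
-/

open AddCommGroup QuotientAddGroup

theorem AddCommGroup.finite_torsion (G : Type*) [AddCommGroup G] [AddGroup.FG G] :
    Finite (torsion G) := by
  have : Module.Finite ℤ (Submodule.torsion ℤ G) :=
    Module.Finite.iff_fg.mpr (IsNoetherian.noetherian _)
  have := Module.finite_of_fg_torsion _ (Submodule.torsion_isTorsion (R := ℤ) (M := G))
  rwa [← Submodule.torsion_int]

theorem AddCommGroup.finrank_quotient_torsion_le (G : Type*) [AddCommGroup G] [AddGroup.FG G] :
    Module.finrank ℤ (G ⧸ torsion G) ≤ Module.finrank ℤ G :=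
  LinearMap.finrank_le_finrank_of_surjective (f := (mk' (torsion G)).toIntLinearMap)
    (mk'_surjective _)

theorem isOfFinAddOrder_of_isOfFinAddOrder_mk {G : Type*} [AddCommGroup G] {N : AddSubgroup G}
    (hN : N ≤ torsion G) {x : G} (hx : IsOfFinAddOrder (x : G ⧸ N)) : IsOfFinAddOrder x := by
  obtain ⟨n, hn, hnx⟩ := isOfFinAddOrder_iff_nsmul_eq_zero.mp hx
  have : n • x ∈ N := by rwa [← eq_zero_iff, mk_nsmul]
  exact (isOfFinAddOrder_nsmul.mp (hN this)).resolve_right hn.ne'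

theorem exists_sub_nsmul_mem_torsion {M : Type*} [AddCommGroup M] {n : ℕ} {x : M}
    (hx : ((x : M ⧸ torsion M) : (M ⧸ torsion M) ⧸ (nsmulAddMonoidHom n).range) = 0) :
    ∃ y, x - n • y ∈ torsion M := by
  obtain ⟨y', hy'⟩ := (eq_zero_iff _).mp hx
  obtain ⟨y, rfl⟩ := mk_surjective y'
  refine ⟨y, (eq_zero_iff _).mp ?_⟩
  rw [mk_sub, mk_nsmul, sub_eq_zero]
  exact hy'.symm

theorem AddMonoidHom.nonempty_addEquiv_of_ker_eq {G H K : Type*} [AddGroup G] [AddGroup H]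
    [AddGroup K] {f : G →+ H} {g : G →+ K} (hf : Function.Surjective f)
    (hg : Function.Surjective g) (h : f.ker = g.ker) : Nonempty (H ≃+ K) :=
  ⟨((quotientKerEquivOfSurjective f hf).symm.trans (quotientAddEquivOfEq h)).trans
    (quotientKerEquivOfSurjective g hg)⟩

section ShortExact

variable {A B C : Type*} [AddCommGroup A] [AddCommGroup B] [AddCommGroup C]
  {i : A →+ B} {j : B →+ C}

theorem ker_mk'_map_comp_eq_sup_range (hexact : Function.Exact i j) (N : AddSubgroup B) :
    ((mk' (N.map j)).comp j).ker = N ⊔ i.range := by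
  rw [← AddMonoidHom.comap_ker, ker_mk', AddSubgroup.comap_map_eq, hexact.addMonoidHom_ker_eq]

theorem ker_mk'_comp_mk' (N : AddSubgroup B) (i : A →+ B) :
    ((mk' ((mk' N).comp i).range).comp (mk' N)).ker = N ⊔ i.range := by
  rw [← AddMonoidHom.comap_ker, ker_mk', AddMonoidHom.range_comp, AddSubgroup.comap_map_eq,
    ker_mk', sup_comm]

theorem nonempty_quotient_map_addEquiv (hj : Function.Surjective j)
    (hexact : Function.Exact i j) (N : AddSubgroup B) :
    Nonempty ((C ⧸ N.map j) ≃+ ((B ⧸ N) ⧸ ((mk' N).comp i).range)) :=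
  AddMonoidHom.nonempty_addEquiv_of_ker_eq (f := (mk' (N.map j)).comp j)
    (g := (mk' ((mk' N).comp i).range).comp (mk' N)) ((mk'_surjective _).comp hj)
    ((mk'_surjective _).comp (mk'_surjective _))
    ((ker_mk'_map_comp_eq_sup_range hexact N).trans (ker_mk'_comp_mk' N i).symm)

theorem exists_mk_apply_eq_and_apply_eq_exponent_nsmul (hj : Function.Surjective j)
    (hexact : Function.Exact i j) (q : torsion (C ⧸ (torsion B).map j)) :
    ∃ b a, (j b : C ⧸ (torsion B).map j) = q ∧ i a = AddMonoid.exponent (torsion C) • b := by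
  obtain ⟨q, hq⟩ := q
  obtain ⟨c, rfl⟩ := mk_surjective q
  obtain ⟨b, rfl⟩ := hj c
  have hb : j b ∈ torsion C := isOfFinAddOrder_of_isOfFinAddOrder_mk (map_torsion_le j) hq
  have : j (AddMonoid.exponent (torsion C) • b) = 0 := by
    rw [map_nsmul]
    exact congrArg Subtype.val (AddMonoid.exponent_nsmul_eq_zero (⟨j b, hb⟩ : torsion C))
  obtain ⟨a, ha⟩ := (hexact _).mp this
  exact ⟨b, a, rfl, ha⟩

theorem mk_apply_eq_mk_apply_of_nsmul_eq (hexact : Function.Exact i j) {n : ℕ} (hn : n ≠ 0)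
    {a₁ a₂ : A} {b₁ b₂ : B} (h₁ : i a₁ = n • b₁) (h₂ : i a₂ = n • b₂)
    (h : ((a₁ : A ⧸ torsion A) : (A ⧸ torsion A) ⧸ (nsmulAddMonoidHom n).range) =
      ((a₂ : A ⧸ torsion A) : (A ⧸ torsion A) ⧸ (nsmulAddMonoidHom n).range)) :
    (j b₁ : C ⧸ (torsion B).map j) = j b₂ := by
  obtain ⟨y, hy⟩ := exists_sub_nsmul_mem_torsion (n := n) (x := a₁ - a₂)
    (by rw [mk_sub, mk_sub, h, sub_self])
  have hw : n • (b₁ - b₂ - i y) = i (a₁ - a₂ - n • y) := by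
    rw [map_sub, map_sub, map_nsmul, h₁, h₂, smul_sub, smul_sub]
  have : b₁ - b₂ - i y ∈ torsion B :=
    (isOfFinAddOrder_nsmul.mp (hw ▸ map_torsion_le i ⟨_, hy, rfl⟩)).resolve_right hn
  rw [eq_iff_sub_mem, ← map_sub]
  exact ⟨_, this, by rw [map_sub, hexact.apply_apply_eq_zero, sub_zero]⟩

theorem card_torsion_quotient_map_torsion_le [AddGroup.FG A] [AddGroup.FG C]
    (hj : Function.Surjective j) (hexact : Function.Exact i j) :
    Nat.card (torsion (C ⧸ (torsion B).map j)) ≤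
      AddMonoid.exponent (torsion C) ^ Module.finrank ℤ A := by
  set e := AddMonoid.exponent (torsion C)
  have : Finite (torsion C) := finite_torsion C
  have he : e ≠ 0 := AddMonoid.exponent_ne_zero_of_finite
  let π : A →+ (A ⧸ torsion A) ⧸ (nsmulAddMonoidHom e).range := (mk' _).comp (mk' _)
  have hcard : Nat.card ((A ⧸ torsion A) ⧸ (nsmulAddMonoidHom e).range) =
      e ^ Module.finrank ℤ (A ⧸ torsion A) :=
    AddSubgroup.index_range_nsmul _ e
  have : Finite ((A ⧸ torsion A) ⧸ (nsmulAddMonoidHom e).range) :=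
    Nat.finite_of_card_ne_zero (hcard ▸ pow_ne_zero _ he)
  choose b a hb ha using exists_mk_apply_eq_and_apply_eq_exponent_nsmul hj hexact
  have hinj : Function.Injective (fun q ↦ π (a q)) := fun q₁ q₂ h ↦
    Subtype.ext (hb q₁ ▸ hb q₂ ▸ mk_apply_eq_mk_apply_of_nsmul_eq hexact he (ha q₁) (ha q₂) h)
  calc Nat.card (torsion (C ⧸ (torsion B).map j))
      ≤ Nat.card ((A ⧸ torsion A) ⧸ (nsmulAddMonoidHom e).range) :=
        Nat.card_le_card_of_injective _ hinj
    _ ≤ e ^ Module.finrank ℤ A :=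
        hcard ▸ Nat.pow_le_pow_right (Nat.pos_of_ne_zero he) (finrank_quotient_torsion_le A)

end ShortExact

theorem stmt5_general (A B C : Type) [AddCommGroup A] [AddCommGroup B] [AddCommGroup C]
    [AddGroup.FG A] [AddGroup.FG C]
    (i : A →+ B) (j : B →+ C)
    (hj : Function.Surjective j)
    (hexact : Function.Exact i j) :
    Nonempty ((C ⧸ (AddCommGroup.torsion B).map j) ≃+
      ((B ⧸ AddCommGroup.torsion B) ⧸
        ((QuotientAddGroup.mk' (AddCommGroup.torsion B)).comp i).range)) ∧
    Nat.card (AddCommGroup.torsion (C ⧸ (AddCommGroup.torsion B).map j)) ≤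
      (AddMonoid.exponent (AddCommGroup.torsion C)) ^ (Module.finrank ℤ A) :=
  ⟨nonempty_quotient_map_addEquiv hj hexact _, card_torsion_quotient_map_torsion_le hj hexact⟩

/-- For a short exact sequence `0 → A → B → C → 0` of finitely generated abelian groups,
`C / j(tor B)` is isomorphic to the quotient of the free abelian group `B/tor B` by the image
of `A/tor A` (i.e. by the image of `A` in `B/tor B`), and the torsion subgroup of
`C/j(tor B)` has order at most `e(C)^{rk A}`. -/
theorem stmt5 (A B C : Type) [AddCommGroup A] [AddCommGroup B] [AddCommGroup C]
    [AddGroup.FG A] [AddGroup.FG B] [AddGroup.FG C]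
    (i : A →+ B) (j : B →+ C)
    (hi : Function.Injective i) (hj : Function.Surjective j)
    (hexact : Function.Exact i j) :
    Nonempty ((C ⧸ (AddCommGroup.torsion B).map j) ≃+
      ((B ⧸ AddCommGroup.torsion B) ⧸
        ((QuotientAddGroup.mk' (AddCommGroup.torsion B)).comp i).range)) ∧
    Nat.card (AddCommGroup.torsion (C ⧸ (AddCommGroup.torsion B).map j)) ≤
      (AddMonoid.exponent (AddCommGroup.torsion C)) ^ (Module.finrank ℤ A) :=
  stmt5_general A B C i j hj hexact
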